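/- Let T be a rigid object in C. Then the subcategory T^⊥ is covariantly finite in C (every object of C admits a left T^⊥-approximation) and ^⊥T is contravariantly finite in C (every object of C admits a right ^⊥T-approximation). -/

import Mathlib

/-!
Common setup: `C` is a Hom-finite, Krull-Schmidt (= idempotent complete, given
Hom-finiteness over a field), `k`-linear triangulated category with suspension
functor `Σ = shiftFunctor C (1 : ℤ)`, and `T` is a rigid object of `C`.
-/

noncomputable section

open CategoryTheory CategoryTheory.Limits CategoryTheory.Pretriangulated

universe v u

namespace PaperBM

variable {C : Type u} [Category.{v} C] [Preadditive C] [HasZeroObject C]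
  [HasShift C ℤ] [∀ n : ℤ, (shiftFunctor C n).Additive] [Pretriangulated C]
  [HasFiniteBiproducts C]

/-- `X` lies in `add T`: it is a direct summand of a finite direct sum of copies of `T`. -/
def memAdd (T X : C) : Prop :=
  ∃ (n : ℕ) (s : X ⟶ ⨁ (fun _ : Fin n => T)) (r : (⨁ fun _ : Fin n => T) ⟶ X), s ≫ r = 𝟙 X

/-- `T` is rigid: `Hom_C(T, ΣT) = 0`. -/
def IsRigidObj (T : C) : Prop := ∀ f : T ⟶ (shiftFunctor C (1 : ℤ)).obj T, f = 0

/-- `Y ∈ T^⊥`, i.e. `Hom_C(X, ΣY) = 0` for all `X ∈ add T`. -/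
def memTperp (T Y : C) : Prop :=
  ∀ (X : C), memAdd T X → ∀ f : X ⟶ (shiftFunctor C (1 : ℤ)).obj Y, f = 0

/-- `Y ∈ ⊥T`, i.e. `Hom_C(Y, ΣX) = 0` for all `X ∈ add T`. -/
def memPerpT (T Y : C) : Prop :=
  ∀ (X : C), memAdd T X → ∀ f : Y ⟶ (shiftFunctor C (1 : ℤ)).obj X, f = 0

/-- `Y ∈ ΣT^⊥`, the image of `T^⊥` under the suspension `Σ`. -/
def memSigmaTperp (T Y : C) : Prop :=
  ∃ Z : C, memTperp T Z ∧ Nonempty (Y ≅ (shiftFunctor C (1 : ℤ)).obj Z)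

/-- The map `f` factors through an object belonging to the class `P` of objects. -/
def FactorsThru (P : C → Prop) {A B : C} (f : A ⟶ B) : Prop :=
  ∃ (Z : C) (g : A ⟶ Z) (h : Z ⟶ B), P Z ∧ g ≫ h = f

/-- The class `S̃` of maps `f : X ⟶ Y` such that in a completion
`Σ⁻¹Z →h X →f Y →g Z` of `f` to a triangle (where `A` plays the role of `Σ⁻¹Z`,
so that `Z = ΣA`), both `g` and `h` factor through an object of `ΣT^⊥`. -/
def Stilde (T : C) : MorphismProperty C := fun X Y f =>
  ∃ (A : C) (h : A ⟶ X) (g : Y ⟶ (shiftFunctor C (1 : ℤ)).obj A),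
    (Triangle.mk h f g ∈ distTriang C) ∧
    FactorsThru (memSigmaTperp T) g ∧ FactorsThru (memSigmaTperp T) h

/-- The class `S` of maps `f : X ⟶ Y` such that in a completion
`Σ⁻¹Z →h X →f Y →g Z` of `f` to a triangle (where `A` plays the role of `Σ⁻¹Z`,
so that `Z = ΣA`), `g` factors through an object of `ΣT^⊥` and `Σ⁻¹Z ∈ ΣT^⊥`. -/
def Sclass (T : C) : MorphismProperty C := fun X Y f =>
  ∃ (A : C) (h : A ⟶ X) (g : Y ⟶ (shiftFunctor C (1 : ℤ)).obj A),
    (Triangle.mk h f g ∈ distTriang C) ∧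
    FactorsThru (memSigmaTperp T) g ∧ memSigmaTperp T A

/-- `X ∈ C(T)`: there is a triangle `T₁ → T₀ → X → ΣT₁` with `T₀, T₁ ∈ add T`. -/
def memCT (T X : C) : Prop :=
  ∃ (T₁ T₀ : C) (a : T₁ ⟶ T₀) (b : T₀ ⟶ X) (c : X ⟶ (shiftFunctor C (1 : ℤ)).obj T₁),
    memAdd T T₁ ∧ memAdd T T₀ ∧ (Triangle.mk a b c ∈ distTriang C)

/-- `f : X₀ ⟶ Y` is a right `P`-approximation of `Y`. -/
def IsRightApprox (P : C → Prop) {X₀ Y : C} (f : X₀ ⟶ Y) : Prop :=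
  P X₀ ∧ ∀ (W : C), P W → ∀ g : W ⟶ Y, ∃ g' : W ⟶ X₀, g' ≫ f = g

/-- `f : Y ⟶ X₀` is a left `P`-approximation of `Y`. -/
def IsLeftApprox (P : C → Prop) {Y X₀ : C} (f : Y ⟶ X₀) : Prop :=
  P X₀ ∧ ∀ (W : C), P W → ∀ g : Y ⟶ W, ∃ g' : X₀ ⟶ W, f ≫ g' = g

/-- The map `f : X₀ ⟶ Y` is right minimal. -/
def IsRightMinimal {X₀ Y : C} (f : X₀ ⟶ Y) : Prop :=
  ∀ g : X₀ ⟶ X₀, g ≫ f = f → IsIso g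

/-- The functor `H = Hom_C(T, -) : C ⥤ Mod End_C(T)ᵒᵖ`.  Here, with Mathlib's
conventions, the endomorphism ring `End (Opposite.op T)` of `T` viewed in `Cᵒᵖ` plays
the role of `End_C(T)ᵒᵖ`, so that each `Hom_C(T, X)` is a left module over it. -/
abbrev homFunctor (T : C) : C ⥤ ModuleCat.{v} (End (Opposite.op T)) :=
  preadditiveCoyonedaObj T ⋙ ModuleCat.restrictScalars.{v}
    ({ toFun := fun r => MulOpposite.op r.unop
       map_one' := rfl
       map_mul' := fun _ _ => rfl
       map_zero' := rfl
       map_add' := fun _ _ => rfl } : End (Opposite.op T) →+* (End T)ᵐᵒᵖ)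

/-- The predicate on `End_C(T)ᵒᵖ`-modules of being finite-dimensional (equivalently,
since `End_C(T)` is a finite-dimensional algebra, finitely generated). -/
abbrev isFinDim (T : C) : ModuleCat.{v} (End (Opposite.op T)) → Prop :=
  fun M => Module.Finite (End (Opposite.op T)) M

/-- The category `mod End_C(T)ᵒᵖ` of finite-dimensional `End_C(T)ᵒᵖ`-modules. -/
abbrev fdMod (T : C) := ObjectProperty.FullSubcategory (isFinDim T)

/-- The ideal relation on `C(T)` of maps factoring through an object of `ΣT^⊥`. -/
def homRelCT (T : C) : HomRel (ObjectProperty.FullSubcategory (memCT T)) :=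
  fun A B f g => FactorsThru (memSigmaTperp T) ((f.hom - g.hom : A.obj ⟶ B.obj))

/-- The ideal relation on `C(T)` of maps factoring through an object of `add ΣT`. -/
def homRelCTadd (T : C) : HomRel (ObjectProperty.FullSubcategory (memCT T)) :=
  fun A B f g => FactorsThru (memAdd ((shiftFunctor C (1 : ℤ)).obj T)) ((f.hom - g.hom : A.obj ⟶ B.obj))

/-- The ideal relation on `C` of maps factoring through an object of `add ΣT`. -/
def homRelAdd (T : C) : HomRel C :=
  fun A B f g => FactorsThru (memAdd ((shiftFunctor C (1 : ℤ)).obj T)) (f - g)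

end PaperBM

open PaperBM

/-!
Take `F : Tⁿ ⟶ ΣY` whose components form a basis of `Hom(T, ΣY)`, so that every map `T ⟶ ΣY`
factors through `F`, and complete it to a triangle `Y ⟶ Z ⟶ Tⁿ ⟶ ΣY`. A map `T ⟶ ΣZ` dies in
`ΣTⁿ` by rigidity, so it lifts to `ΣY`, hence factors through `F`, which dies in `ΣZ`; thus
`Z ∈ T^⊥`. A map `Y ⟶ W` with `W ∈ T^⊥` is killed by `F` (after shifting), so it extends along
`Y ⟶ Z`. Dually, a basis of `Hom(Y, ΣT)` gives `Y ⟶ (ΣT)ⁿ`, and its cocone `X ⟶ Y` is a right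
`^⊥T`-approximation.
-/

namespace PaperBM

section Additive

variable {C : Type*} [Category C] [Preadditive C] [HasFiniteBiproducts C]

lemma memAdd_biproduct (T : C) (n : ℕ) : memAdd T (⨁ fun _ : Fin n => T) :=
  ⟨n, 𝟙 _, 𝟙 _, Category.id_comp _⟩

lemma memAdd_self (T : C) : memAdd T T :=
  ⟨1, biproduct.lift fun _ => 𝟙 T, biproduct.π _ 0, by simp⟩

lemma memAdd.map {D : Type*} [Category D] [Preadditive D] [HasFiniteBiproducts D]
    (F : C ⥤ D) [F.Additive] {T X : C} (hX : memAdd T X) : memAdd (F.obj T) (F.obj X) := by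
  obtain ⟨n, s, r, hsr⟩ := hX
  refine ⟨n, F.map s ≫ (F.mapBiproduct _).hom, (F.mapBiproduct _).inv ≫ F.map r, ?_⟩
  rw [Category.assoc, Iso.hom_inv_id_assoc, ← F.map_comp, hsr, F.map_id]

lemma eq_zero_of_memAdd_source {T X Y : C} (hX : memAdd T X) (hT : ∀ f : T ⟶ Y, f = 0)
    (f : X ⟶ Y) : f = 0 := by
  obtain ⟨n, s, r, hsr⟩ := hX
  have hr : r ≫ f = 0 := biproduct.hom_ext' _ _ fun j => by
    rw [← Category.assoc, comp_zero]
    exact hT _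
  rw [← Category.id_comp f, ← hsr, Category.assoc, hr, comp_zero]

lemma eq_zero_of_memAdd_target {T X Y : C} (hX : memAdd T X) (hT : ∀ f : Y ⟶ T, f = 0)
    (f : Y ⟶ X) : f = 0 := by
  obtain ⟨n, s, r, hsr⟩ := hX
  have hs : f ≫ s = 0 := biproduct.hom_ext _ _ fun j => by
    rw [Category.assoc, zero_comp]
    exact hT _
  rw [← Category.comp_id f, ← hsr, ← Category.assoc, hs, zero_comp]

variable (k : Type*) [Field k] [Linear k C]

lemma exists_universal_hom_from_biproduct (A B : C) [FiniteDimensional k (A ⟶ B)] :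
    ∃ (n : ℕ) (F : (⨁ fun _ : Fin n => A) ⟶ B), ∀ φ : A ⟶ B, ∃ c, c ≫ F = φ := by
  let b := Module.finBasis k (A ⟶ B)
  refine ⟨_, biproduct.desc b, fun φ => ⟨biproduct.lift fun i => b.repr φ i • 𝟙 A, ?_⟩⟩
  rw [biproduct.lift_desc]
  simpa only [Linear.smul_comp, Category.id_comp] using b.sum_repr φ

lemma exists_universal_hom_to_biproduct (A B : C) [FiniteDimensional k (B ⟶ A)] :
    ∃ (n : ℕ) (G : B ⟶ ⨁ fun _ : Fin n => A), ∀ φ : B ⟶ A, ∃ c, G ≫ c = φ := by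
  let b := Module.finBasis k (B ⟶ A)
  refine ⟨_, biproduct.lift b, fun φ => ⟨biproduct.desc fun i => b.repr φ i • 𝟙 A, ?_⟩⟩
  rw [biproduct.lift_desc]
  simpa only [Linear.comp_smul, Category.comp_id] using b.sum_repr φ

end Additive

section Shift

variable {C : Type*} [Category C] [Preadditive C] [HasShift C ℤ]

lemma IsRigidObj.shift {T : C} (hT : IsRigidObj T) (n : ℤ) : IsRigidObj (T⟦n⟧) := fun f => by
  rw [← cancel_mono ((shiftFunctorComm C n 1).hom.app T), zero_comp,
    ← (shiftFunctor C n).map_preimage (f ≫ _), hT ((shiftFunctor C n).preimage _),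
    Functor.map_zero]

variable [HasFiniteBiproducts C]

lemma memTperp_iff {T Y : C} : memTperp T Y ↔ ∀ f : T ⟶ Y⟦(1 : ℤ)⟧, f = 0 :=
  ⟨fun hY => hY T (memAdd_self T), fun hY _ hX => eq_zero_of_memAdd_source hX hY⟩

variable [∀ n : ℤ, (shiftFunctor C n).Additive]

lemma memPerpT_iff {T Y : C} : memPerpT T Y ↔ ∀ f : Y ⟶ T⟦(1 : ℤ)⟧, f = 0 :=
  ⟨fun hY => hY T (memAdd_self T),
    fun hY _ hX => eq_zero_of_memAdd_target (hX.map (shiftFunctor C (1 : ℤ))) hY⟩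

end Shift

section Pretriangulated

variable {C : Type*} [Category C] [Preadditive C] [HasZeroObject C] [HasShift C ℤ]
  [∀ n : ℤ, (shiftFunctor C n).Additive] [Pretriangulated C]

lemma Triangle.yoneda_exact₁ (T : Triangle C) (hT : T ∈ distTriang C) {W : C}
    (f : T.obj₁ ⟶ W) (hf : T.mor₃ ≫ f⟦(1 : ℤ)⟧' = 0) : ∃ g : T.obj₂ ⟶ W, f = T.mor₁ ≫ g := by
  obtain ⟨ψ, hψ⟩ : ∃ ψ : T.obj₂⟦(1 : ℤ)⟧ ⟶ W⟦(1 : ℤ)⟧, f⟦(1 : ℤ)⟧' = (-T.mor₁⟦(1 : ℤ)⟧') ≫ ψ :=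
    Triangle.yoneda_exact₃ _ (rot_of_distTriang _ hT) _ hf
  refine ⟨-(shiftFunctor C (1 : ℤ)).preimage ψ, (shiftFunctor C (1 : ℤ)).map_injective ?_⟩
  rw [Functor.map_comp, Functor.map_neg, Functor.map_preimage, Preadditive.comp_neg,
    ← Preadditive.neg_comp]
  exact hψ

variable [HasFiniteBiproducts C]

lemma isLeftApprox_memTperp_of_distTriang {T Y Z P : C} (hT : IsRigidObj T) (hP : memAdd T P)
    {u : Y ⟶ Z} {g : Z ⟶ P} {F : P ⟶ Y⟦(1 : ℤ)⟧} (hmem : Triangle.mk u g F ∈ distTriang C)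
    (hF : ∀ φ : T ⟶ Y⟦(1 : ℤ)⟧, ∃ c, c ≫ F = φ) : IsLeftApprox (memTperp T) u := by
  have hrot := rot_of_distTriang _ hmem
  refine ⟨memTperp_iff.2 fun φ => ?_, fun W hW g₀ => ?_⟩
  · obtain ⟨χ, rfl⟩ := Triangle.coyoneda_exact₁ _ hrot φ
      (eq_zero_of_memAdd_target (hP.map (shiftFunctor C (1 : ℤ))) hT _)
    obtain ⟨c, rfl⟩ := hF χ
    exact (Category.assoc _ _ _).trans
      ((c ≫= comp_distTriang_mor_zero₂₃ _ hrot).trans comp_zero)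
  · obtain ⟨g', hg'⟩ := Triangle.yoneda_exact₁ _ hmem g₀ (hW P hP _)
    exact ⟨g', hg'.symm⟩

lemma isRightApprox_memPerpT_of_distTriang {T X Y P : C} (hT : IsRigidObj T)
    (hP : memAdd (T⟦(1 : ℤ)⟧) P) {h : X ⟶ Y} {G : Y ⟶ P} {w : P ⟶ X⟦(1 : ℤ)⟧}
    (hmem : Triangle.mk h G w ∈ distTriang C) (hG : ∀ φ : Y ⟶ T⟦(1 : ℤ)⟧, ∃ c, G ≫ c = φ) :
    IsRightApprox (memPerpT T) h := by
  refine ⟨memPerpT_iff.2 fun φ => ?_, fun W hW g₀ => ?_⟩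
  · obtain ⟨χ, rfl⟩ := Triangle.yoneda_exact₁ _ hmem φ
      (eq_zero_of_memAdd_source hP (hT.shift 1) _)
    obtain ⟨c, rfl⟩ := hG χ
    exact (Category.assoc _ _ _).symm.trans
      ((comp_distTriang_mor_zero₁₂ _ hmem =≫ c).trans zero_comp)
  · obtain ⟨g', hg'⟩ := Triangle.coyoneda_exact₂ _ hmem g₀
      (eq_zero_of_memAdd_target hP (memPerpT_iff.1 hW) _)
    exact ⟨g', hg'.symm⟩

end Pretriangulated

end PaperBM

/-- For a rigid object `T`, the subcategory `T^⊥` is covariantly finite and `^⊥T` is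
contravariantly finite in `C`. -/
theorem statement_2 {C : Type u} [Category.{v} C] [Preadditive C] [HasZeroObject C]
    [HasShift C ℤ] [∀ n : ℤ, (shiftFunctor C n).Additive] [Pretriangulated C]
    [HasFiniteBiproducts C]
    {k : Type*} [Field k] [CategoryTheory.Linear k C]
    [∀ X Y : C, FiniteDimensional k (X ⟶ Y)] [IsIdempotentComplete C]
    (T : C) (hT : IsRigidObj T) :
    (∀ Y : C, ∃ (X₀ : C) (f : Y ⟶ X₀), IsLeftApprox (memTperp T) f) ∧
    (∀ Y : C, ∃ (X₀ : C) (f : X₀ ⟶ Y), IsRightApprox (memPerpT T) f) := by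
  refine ⟨fun Y => ?_, fun Y => ?_⟩
  · obtain ⟨n, F, hF⟩ := exists_universal_hom_from_biproduct k T (Y⟦(1 : ℤ)⟧)
    obtain ⟨Z, u, g, hmem⟩ := distinguished_cocone_triangle₂ F
    exact ⟨Z, u, isLeftApprox_memTperp_of_distTriang hT (memAdd_biproduct T n) hmem hF⟩
  · obtain ⟨n, G, hG⟩ := exists_universal_hom_to_biproduct k (T⟦(1 : ℤ)⟧) Y
    obtain ⟨X, h, w, hmem⟩ := distinguished_cocone_triangle₁ G
    exact ⟨X, h, isRightApprox_memPerpT_of_distTriang hT (memAdd_biproduct _ n) hmem hG⟩
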